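/- (Under the L-drift condition, petite sets are bounded.) Assume the standard Markov chain setup and the L-drift condition L(V,φ,Ψ). If a set B ∈ ℬ(𝒳) is petite for the chain X, then there exists r₀ ∈ (1,∞) such that B ⊂ {x ∈ 𝒳 : V(x) ≤ r₀}. -/

import Mathlib

open MeasureTheory ProbabilityTheory Filter Set
open scoped ENNReal NNReal

noncomputable section

/-- A time-homogeneous Markov chain on a measurable space `𝒳`: a Markov transition
kernel `P` together with the path-space law `law x` of the chain started at `x`.
The field `law_markov` is the Markov property: for any event `C` depending only on the
first `n+1` coordinates, `ℙ_x(C ∩ {X_{n+1} ∈ A}) = ∫_C P(X_n, A) dℙ_x`. -/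
structure MarkovChain (𝒳 : Type*) [MeasurableSpace 𝒳] where
  P : ProbabilityTheory.Kernel 𝒳 𝒳
  isMarkov : IsMarkovKernel P
  law : 𝒳 → Measure (ℕ → 𝒳)
  law_prob : ∀ x, IsProbabilityMeasure (law x)
  law_meas : Measurable law
  law_start : ∀ x, law x {ω | ω 0 = x} = 1
  law_markov : ∀ (x : 𝒳) (n : ℕ) (C : Set (ℕ → 𝒳)) (A : Set 𝒳),
    MeasurableSet C → MeasurableSet A →
    (∀ ω ω' : ℕ → 𝒳, (∀ i ≤ n, ω i = ω' i) → (ω ∈ C ↔ ω' ∈ C)) →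
    law x (C ∩ {ω | ω (n + 1) ∈ A}) = ∫⁻ ω in C, P (ω n) A ∂(law x)

namespace MarkovChain

variable {𝒳 : Type*} [MeasurableSpace 𝒳]

/-- `mc.stepDist x n` is the law of `X_n` under `ℙ_x`, i.e. the `n`-step transition
probability `P^n(x, ·)`. -/
def stepDist (mc : MarkovChain 𝒳) (x : 𝒳) (n : ℕ) : Measure 𝒳 :=
  (mc.law x).map (fun ω => ω n)

end MarkovChain

/-- First hitting time of the set `s` by the path `ω` (equal to `⊤` if `s` is never hit). -/
def hitTime {𝒳 : Type*} (s : Set 𝒳) (ω : ℕ → 𝒳) : ℕ∞ :=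
  ⨅ (n : ℕ) (_ : ω n ∈ s), (n : ℕ∞)

/-- First return time to `B` after time `k` : `τ_B(k) = inf {n ≥ k : ω n ∈ B}`. -/
def returnTime {𝒳 : Type*} (B : Set 𝒳) (k : ℕ) (ω : ℕ → 𝒳) : ℕ∞ :=
  ⨅ (n : ℕ) (_ : k ≤ n ∧ ω n ∈ B), (n : ℕ∞)

/-- The set of paths along which `V` has `limsup_{n→∞} V(X_n) = ∞`. -/
def nonConfined {𝒳 : Type*} (V : 𝒳 → ℝ) : Set (ℕ → 𝒳) :=
  {ω | ∀ M : ℝ, ∃ᶠ n in atTop, M < V (ω n)}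

/-- The `f`-variation distance between two (finite) measures:
`‖μ - ν‖_f = sup { |∫ g dμ - ∫ g dν| : g measurable, |g| ≤ f }`. -/
def fVar {𝒳 : Type*} [MeasurableSpace 𝒳] (f : 𝒳 → ℝ) (μ ν : Measure 𝒳) : ℝ :=
  ⨆ g : {g : 𝒳 → ℝ // Measurable g ∧ ∀ x, |g x| ≤ f x},
    |(∫ x, (g : 𝒳 → ℝ) x ∂μ) - ∫ x, (g : 𝒳 → ℝ) x ∂ν|

/-- The standard setup: ergodic Markov chain with invariant probability measure `π`;
the chain is Feller, positive Harris recurrent and converges to `π` in total variation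
from every starting point (hence aperiodic and `π`-irreducible). -/
structure StdSetup {𝒳 : Type*} [TopologicalSpace 𝒳] [MeasurableSpace 𝒳]
    (mc : MarkovChain 𝒳) where
  π : Measure 𝒳
  π_prob : IsProbabilityMeasure π
  π_inv : π.bind (fun x => mc.P x) = π
  feller : ∀ (n : ℕ) (O : Set 𝒳), IsOpen O →
    LowerSemicontinuous fun x => (mc.stepDist x n O).toReal
  harris : ∀ (x : 𝒳) (A : Set 𝒳), MeasurableSet A → 0 < π A →
    mc.law x {ω | ∃ᶠ n in atTop, ω n ∈ A} = 1
  ergodic_tv : ∀ x : 𝒳,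
    Tendsto (fun n => fVar (fun _ => (1 : ℝ)) (mc.stepDist x n) π) atTop (nhds 0)

/-- The L-drift condition `L(V, φ, Ψ)` of the paper. -/
structure LDrift {𝒳 : Type*} [TopologicalSpace 𝒳] [MeasurableSpace 𝒳]
    (mc : MarkovChain 𝒳) (V : 𝒳 → ℝ) (φ : ℝ → ℝ) (Ψ : ℝ → ℝ) where
  V_one_le : ∀ x, 1 ≤ V x
  V_cont : Continuous V
  nonconf : ∀ x, mc.law x (nonConfined V) = 1
  ℓ₀ : ℝ
  one_le_ℓ₀ : 1 ≤ ℓ₀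
  φ_nonneg : ∀ r ∈ Set.Ioc (0 : ℝ) 1, 0 ≤ φ r
  φ_cont : ContinuousOn φ (Set.Ioc 0 1)
  rφ_anti : StrictAntiOn (fun r => r * φ (1 / r)) (Set.Ici (1 : ℝ))
  rφ_lim : Tendsto (fun r => r * φ (1 / r)) atTop (nhds 0)
  b : ℝ
  b_nonneg : 0 ≤ b
  drift : ∀ x, (∫ y, (V y)⁻¹ ∂(mc.P x)) - φ ((V x)⁻¹) ≤
    (V x)⁻¹ - (if V x ≤ ℓ₀ then b else 0)
  Ψ_one_le : ∀ r, 1 ≤ r → 1 ≤ Ψ r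
  Ψ_diff : DifferentiableOn ℝ Ψ (Set.Ici 1)
  Ψ_mono : StrictMonoOn Ψ (Set.Ici 1)
  Ψ_submul : ∃ C : ℝ, 0 < C ∧ ∀ r₁ r₂, 1 ≤ r₁ → 1 ≤ r₂ → Ψ (r₁ + r₂) ≤ C * Ψ r₁ * Ψ r₂
  Cconst : ℝ → ℝ → ℝ
  Cconst_mem : ∀ ℓ m, ℓ₀ < ℓ → 0 < m → Cconst ℓ m ∈ Set.Ioo (0 : ℝ) 1
  hit_lb : ∀ ℓ m, ℓ₀ < ℓ → 0 < m → ∀ r, ℓ + m < r → ∀ x, ℓ + m ≤ V x →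
    ENNReal.ofReal (Cconst ℓ m / Ψ r) ≤
      mc.law x {ω | hitTime {y | r < V y} ω < hitTime {y | V y < ℓ} ω}

/-- `G_h(r) = q (1-q) h(r) / (r φ(1/r))`. -/
def Gfun (q : ℝ) (φ h : ℝ → ℝ) (r : ℝ) : ℝ := q * (1 - q) * h r / (r * φ (1 / r))

/-- A function is locally integrable at infinity if it is integrable on `[l, ∞)`
for some `l ≥ 0`. -/
def L1locInfty (f : ℝ → ℝ) : Prop := ∃ l : ℝ, 0 ≤ l ∧ MeasureTheory.IntegrableOn f (Set.Ici l)

open scoped Classical in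
/-- The modulated sum `∑_{k=0}^{T(ω)} h(V(ω_k))` (with value in `ℝ≥0∞`, the sum being a
series when `T(ω) = ∞`). -/
def modSum {𝒳 : Type*} (h : ℝ → ℝ) (V : 𝒳 → ℝ) (T : (ℕ → 𝒳) → ℕ∞) (ω : ℕ → 𝒳) : ℝ≥0∞ :=
  ∑' n : ℕ, if (n : ℕ∞) ≤ T ω then ENNReal.ofReal (h (V (ω n))) else 0

/-- Convergence in distribution of a sequence of laws on `ℝ`: integrals of bounded
continuous functions converge. -/
def TendstoInDistribution (μs : ℕ → Measure ℝ) (ν : Measure ℝ) : Prop :=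
  ∀ f : BoundedContinuousFunction ℝ ℝ,
    Tendsto (fun n => ∫ z, f z ∂(μs n)) atTop (nhds (∫ z, f z ∂ν))

/-- The ergodic average `S_n(g)(ω) = (1/n) ∑_{k=0}^{n-1} g(ω_k)`. -/
def ergAvg {𝒳 : Type*} (g : 𝒳 → ℝ) (n : ℕ) (ω : ℕ → 𝒳) : ℝ :=
  (∑ k ∈ Finset.range n, g (ω k)) / n

/-- The CLT holds for the ergodic average `S_n(g)`: there is `σ² ∈ (0,∞)` with
`√n (S_n(g) − π(g)) → N(0,σ²)` in distribution for every starting state. -/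
def CLTholds {𝒳 : Type*} [MeasurableSpace 𝒳] (mc : MarkovChain 𝒳) (π : Measure 𝒳)
    (g : 𝒳 → ℝ) : Prop :=
  ∃ σ2 : NNReal, 0 < σ2 ∧ ∀ x : 𝒳,
    TendstoInDistribution
      (fun n => (mc.law x).map fun ω => Real.sqrt n * (ergAvg g n ω - ∫ y, g y ∂π))
      (gaussianReal 0 σ2)

end

/-- `B` is petite for the chain `mc`: there exist a probability measure `a` on
`ℕ ∖ {0}` and a non-zero finite measure `ν` with
`∑_{j≥1} P^j(x,·) a(j) ≥ ν(·)` for all `x ∈ B`. -/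
def IsPetite {𝒳 : Type*} [MeasurableSpace 𝒳] (mc : MarkovChain 𝒳) (B : Set 𝒳) : Prop :=
  B.Nonempty ∧
  ∃ a : Measure ℕ, IsProbabilityMeasure a ∧ a {0} = 0 ∧
    ∃ ν : Measure 𝒳, IsFiniteMeasure ν ∧ 0 < ν Set.univ ∧
      ∀ x ∈ B, ∀ A : Set 𝒳, MeasurableSet A →
        ν A ≤ ∑' j : ℕ, a {j} * mc.stepDist x j A

/-! The drift condition gives `P(1/V) ≤ (1 + φ(1))/V`, hence `P^j(1/V) ≤ (1 + φ(1))^j/V`, and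
Markov's inequality turns this into `P^j(x, {V ≤ ℓ}) ≤ ℓ (1 + φ(1))^j / V(x)`. Conversely, the
minorisation of a petite set, applied to a sublevel set `{V ≤ ℓ}` of positive `ν`-measure and
truncated where the tail of `a` is small, gives `ε ≤ ∑_{j<N} P^j(x, {V ≤ ℓ})` uniformly on `B`.
Together the two bounds keep `1/V` away from `0` on `B`. -/

namespace MarkovChain

variable {𝒳 : Type*} [MeasurableSpace 𝒳] (mc : MarkovChain 𝒳)

instance (x : 𝒳) : IsProbabilityMeasure (mc.law x) := mc.law_prob x

instance (x : 𝒳) (n : ℕ) : IsProbabilityMeasure (mc.stepDist x n) :=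
  Measure.isProbabilityMeasure_map (measurable_pi_apply n).aemeasurable

theorem stepDist_zero (x : 𝒳) : mc.stepDist x 0 = Measure.dirac x := by
  ext A hA
  have hE : MeasurableSet ((fun ω : ℕ → 𝒳 => ω 0) ⁻¹' A) := measurable_pi_apply 0 hA
  rw [stepDist, Measure.map_apply (measurable_pi_apply 0) hA, Measure.dirac_apply' x hA]
  by_cases hx : x ∈ A
  · rw [Set.indicator_of_mem hx]
    exact le_antisymm prob_le_one <| (mc.law_start x).symm.le.trans <|
      measure_mono fun ω (hω : ω 0 = x) => show ω 0 ∈ A from hω ▸ hx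
  · rw [Set.indicator_of_notMem hx, ← prob_compl_eq_one_iff hE]
    exact le_antisymm prob_le_one <| (mc.law_start x).symm.le.trans <|
      measure_mono fun ω (hω : ω 0 = x) (h : ω 0 ∈ A) => hx (hω ▸ h)

theorem stepDist_succ (x : 𝒳) (n : ℕ) :
    mc.stepDist x (n + 1) = (mc.stepDist x n).bind mc.P := by
  ext A hA
  have h := mc.law_markov x n univ A MeasurableSet.univ hA fun _ _ _ => Iff.rfl
  rw [univ_inter, Measure.restrict_univ] at h
  rw [Measure.bind_apply hA mc.P.measurable.aemeasurable, stepDist, stepDist,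
    Measure.map_apply (measurable_pi_apply (n + 1)) hA,
    lintegral_map (mc.P.measurable_coe hA) (measurable_pi_apply n)]
  exact h

theorem lintegral_stepDist_le_pow {f : 𝒳 → ℝ≥0∞} (hf : Measurable f) {c : ℝ≥0∞}
    (hPf : ∀ x, ∫⁻ y, f y ∂(mc.P x) ≤ c * f x) (x : 𝒳) (n : ℕ) :
    ∫⁻ y, f y ∂(mc.stepDist x n) ≤ c ^ n * f x := by
  induction n with
  | zero => rw [stepDist_zero, lintegral_dirac' x hf, pow_zero, one_mul]
  | succ n ih =>
    calc ∫⁻ y, f y ∂(mc.stepDist x (n + 1))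
        = ∫⁻ y, ∫⁻ z, f z ∂(mc.P y) ∂(mc.stepDist x n) := by
          rw [stepDist_succ, Measure.lintegral_bind mc.P.measurable.aemeasurable hf.aemeasurable]
      _ ≤ ∫⁻ y, c * f y ∂(mc.stepDist x n) := lintegral_mono hPf
      _ = c * ∫⁻ y, f y ∂(mc.stepDist x n) := lintegral_const_mul c hf
      _ ≤ c * (c ^ n * f x) := by gcongr
      _ = c ^ (n + 1) * f x := by ring

end MarkovChain

theorem IsPetite.exists_le_sum_stepDist {𝒳 : Type*} [MeasurableSpace 𝒳] {mc : MarkovChain 𝒳}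
    {B : Set 𝒳} (hB : IsPetite mc B) {A : ℕ → Set 𝒳} (hA : ∀ n, MeasurableSet (A n))
    (hcover : ⋃ n, A n = univ) :
    ∃ n N : ℕ, ∃ ε : ℝ≥0∞, ε ≠ 0 ∧
      ∀ x ∈ B, ε ≤ ∑ j ∈ Finset.range N, mc.stepDist x j (A n) := by
  obtain ⟨-, a, ha, -, ν, hν, hν_pos, hminor⟩ := hB
  obtain ⟨n, hn⟩ : ∃ n, ν (A n) ≠ 0 := by
    by_contra! h
    exact hν_pos.ne' (hcover ▸ measure_iUnion_null h)
  have hsum : ∑' j, a {j} = 1 := by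
    rw [← measure_iUnion (fun _ _ hij => disjoint_singleton.mpr hij) measurableSet_singleton,
      iUnion_of_singleton, measure_univ]
  obtain ⟨N, hN⟩ : ∃ N, ∑' k, a {k + N} < ν (A n) / 2 :=
    ((ENNReal.tendsto_sum_nat_add _ (hsum ▸ ENNReal.one_ne_top)).eventually_lt_const
      (ENNReal.half_pos hn)).exists
  refine ⟨n, N, ν (A n) / 2, (ENNReal.half_pos hn).ne', fun x hx => ?_⟩
  have hhead : ∑ j ∈ Finset.range N, a {j} * mc.stepDist x j (A n)
      ≤ ∑ j ∈ Finset.range N, mc.stepDist x j (A n) :=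
    Finset.sum_le_sum fun j _ => mul_le_of_le_one_left' prob_le_one
  have htail : ∑' k, a {k + N} * mc.stepDist x (k + N) (A n) ≤ ν (A n) / 2 :=
    (ENNReal.tsum_le_tsum fun k => mul_le_of_le_one_right' prob_le_one).trans hN.le
  have h := (hminor x hx (A n) (hA n)).trans
    ((ENNReal.summable.sum_add_tsum_nat_add' (k := N)).symm.le.trans (add_le_add hhead htail))
  rwa [← tsub_le_iff_right, ENNReal.sub_half (measure_ne_top ν _)] at h

namespace LDrift

variable {𝒳 : Type*} [TopologicalSpace 𝒳] [MeasurableSpace 𝒳] {mc : MarkovChain 𝒳}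
  {V : 𝒳 → ℝ} {φ Ψ : ℝ → ℝ}

theorem φ_inv_le (ld : LDrift mc V φ Ψ) {r : ℝ} (hr : 1 ≤ r) : φ r⁻¹ ≤ φ 1 * r⁻¹ := by
  have hr' : r * φ r⁻¹ ≤ φ 1 := by
    simpa using ld.rφ_anti.antitoneOn (mem_Ici.2 le_rfl) (mem_Ici.2 hr) hr
  rw [← div_eq_mul_inv, le_div_iff₀ (by linarith)]
  linarith

theorem integral_inv_le (ld : LDrift mc V φ Ψ) (x : 𝒳) :
    ∫ y, (V y)⁻¹ ∂(mc.P x) ≤ (1 + φ 1) * (V x)⁻¹ := by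
  have hb : 0 ≤ if V x ≤ ld.ℓ₀ then ld.b else 0 := by
    split_ifs
    exacts [ld.b_nonneg, le_rfl]
  linarith [ld.drift x, ld.φ_inv_le (ld.V_one_le x)]

variable [OpensMeasurableSpace 𝒳]

theorem lintegral_inv_le (ld : LDrift mc V φ Ψ) (x : 𝒳) :
    ∫⁻ y, ENNReal.ofReal (V y)⁻¹ ∂(mc.P x)
      ≤ ENNReal.ofReal (1 + φ 1) * ENNReal.ofReal (V x)⁻¹ := by
  have := mc.isMarkov
  have hinv_nonneg : ∀ y, 0 ≤ (V y)⁻¹ := fun y => inv_nonneg.2 (by linarith [ld.V_one_le y])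
  have hint : Integrable (fun y => (V y)⁻¹) (mc.P x) :=
    (integrable_const 1).mono' ld.V_cont.measurable.inv.aestronglyMeasurable
      (Eventually.of_forall fun y => by
        rw [Real.norm_of_nonneg (hinv_nonneg y)]
        exact inv_le_one_of_one_le₀ (ld.V_one_le y))
  rw [← ofReal_integral_eq_lintegral_ofReal hint (Eventually.of_forall hinv_nonneg),
    ← ENNReal.ofReal_mul (by linarith [ld.φ_nonneg 1 ⟨one_pos, le_rfl⟩])]
  exact ENNReal.ofReal_le_ofReal (ld.integral_inv_le x)

theorem stepDist_sublevel_le (ld : LDrift mc V φ Ψ) (x : 𝒳) (j : ℕ) {ℓ : ℝ} (hℓ : 0 < ℓ) :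
    mc.stepDist x j {y | V y ≤ ℓ}
      ≤ ENNReal.ofReal ℓ * ENNReal.ofReal (1 + φ 1) ^ j * ENNReal.ofReal (V x)⁻¹ := by
  have hmeas : Measurable fun y => ENNReal.ofReal (V y)⁻¹ :=
    ld.V_cont.measurable.inv.ennreal_ofReal
  have hsub : {y | V y ≤ ℓ} ⊆ {y | ENNReal.ofReal ℓ⁻¹ ≤ ENNReal.ofReal (V y)⁻¹} := fun y hy =>
    ENNReal.ofReal_le_ofReal (inv_anti₀ (by linarith [ld.V_one_le y]) hy)
  calc mc.stepDist x j {y | V y ≤ ℓ}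
      ≤ (∫⁻ y, ENNReal.ofReal (V y)⁻¹ ∂(mc.stepDist x j)) / ENNReal.ofReal ℓ⁻¹ :=
        (measure_mono hsub).trans <| meas_ge_le_lintegral_div hmeas.aemeasurable
          (by simpa using hℓ) ENNReal.ofReal_ne_top
    _ ≤ ENNReal.ofReal (1 + φ 1) ^ j * ENNReal.ofReal (V x)⁻¹ / ENNReal.ofReal ℓ⁻¹ := by
        gcongr
        exact mc.lintegral_stepDist_le_pow hmeas ld.lintegral_inv_le x j
    _ = ENNReal.ofReal ℓ * ENNReal.ofReal (1 + φ 1) ^ j * ENNReal.ofReal (V x)⁻¹ := by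
        rw [ENNReal.ofReal_inv_of_pos hℓ, div_eq_mul_inv, inv_inv, mul_comm, mul_assoc]

end LDrift

theorem le_toReal_div_of_le_mul_ofReal_inv {ε K : ℝ≥0∞} (hε : ε ≠ 0) (hK : K ≠ ∞) {v : ℝ}
    (hv : 0 < v) (h : ε ≤ K * ENNReal.ofReal v⁻¹) : v ≤ (K / ε).toReal := by
  rw [ENNReal.ofReal_inv_of_pos hv, ← div_eq_mul_inv,
    ENNReal.le_div_iff_mul_le (Or.inl (ENNReal.ofReal_pos.2 hv).ne')
      (Or.inl ENNReal.ofReal_ne_top)] at h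
  rw [← ENNReal.ofReal_le_iff_le_toReal (ENNReal.div_ne_top hK hε),
    ENNReal.le_div_iff_mul_le (Or.inl hε) (Or.inr hK), mul_comm]
  exact h

theorem petite_sets_bounded_general
    {𝒳 : Type*} [TopologicalSpace 𝒳]
    [MeasurableSpace 𝒳] [BorelSpace 𝒳]
    (mc : MarkovChain 𝒳)
    (V : 𝒳 → ℝ) (φ Ψ : ℝ → ℝ) (ld : LDrift mc V φ Ψ)
    (B : Set 𝒳) (hpetite : IsPetite mc B) :
    ∃ r₀ : ℝ, 1 < r₀ ∧ B ⊆ {x | V x ≤ r₀} := by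
  obtain ⟨n, N, ε, hε, hvisit⟩ := hpetite.exists_le_sum_stepDist
    (A := fun n : ℕ => {y | V y ≤ n + 1}) (fun _ => ld.V_cont.measurable measurableSet_Iic)
    (iUnion_eq_univ_iff.2 fun y => (exists_nat_ge (V y)).imp fun n hn => by
      simp only [mem_ofPred_eq]; linarith)
  set K := ∑ j ∈ Finset.range N, ENNReal.ofReal (n + 1) * ENNReal.ofReal (1 + φ 1) ^ j
  have hK : K ≠ ∞ := ENNReal.sum_ne_top.2 fun j _ =>
    ENNReal.mul_ne_top ENNReal.ofReal_ne_top (ENNReal.pow_ne_top ENNReal.ofReal_ne_top)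
  have hlower : ∀ x ∈ B, ε ≤ K * ENNReal.ofReal (V x)⁻¹ := fun x hx => by
    rw [Finset.sum_mul]
    exact (hvisit x hx).trans <|
      Finset.sum_le_sum fun j _ => ld.stepDist_sublevel_le x j (by positivity)
  refine ⟨max 2 (K / ε).toReal, one_lt_two.trans_le (le_max_left _ _), fun x hx => ?_⟩
  exact le_max_of_le_right <|
    le_toReal_div_of_le_mul_ofReal_inv hε hK (by linarith [ld.V_one_le x]) (hlower x hx)

/-- **Lemma (under the L-drift condition, petite sets are bounded).**
If `B` is petite for the chain `X`, then `B ⊆ {V ≤ r₀}` for some `r₀ ∈ (1,∞)`. -/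
theorem petite_sets_bounded
    {𝒳 : Type*} [TopologicalSpace 𝒳] [LocallyCompactSpace 𝒳]
    [MeasurableSpace 𝒳] [BorelSpace 𝒳]
    (mc : MarkovChain 𝒳) (setup : StdSetup mc)
    (V : 𝒳 → ℝ) (φ Ψ : ℝ → ℝ) (ld : LDrift mc V φ Ψ)
    (B : Set 𝒳) (hB : MeasurableSet B) (hpetite : IsPetite mc B) :
    ∃ r₀ : ℝ, 1 < r₀ ∧ B ⊆ {x | V x ≤ r₀} :=
  petite_sets_bounded_general mc V φ Ψ ld B hpetite
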